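/- arXiv:math/0506268 — 3 statements merged into one kernel-verified Lean document; each statement's English description precedes it below -/
import Mathlib

section
/- For any path p in the double quiver Q̄, the necklace derivation d_p annihilates the element w - λ, i.e., d_p(w) = 0, where w = Σ_{a∈Q} [a, a*] = Σ_{a∈Q̄} ε(a) a a* in K Q̄. Explicitly, d_p(w) = Σ_{j=1}^{ℓ(p)} p_{>j} p_{<j} p_j − Σ_{j=1}^{ℓ(p)} p_j p_{>j} p_{<j} = 0. -/
open scoped Classical

/-- A (K-linear) derivation of a possibly noncommutative algebra. -/
def IsDerivation (K : Type*) {A : Type*} [CommRing K] [Ring A] [Algebra K A]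
    (d : A →ₗ[K] A) : Prop :=
  ∀ a b : A, d (a * b) = a * d b + d a * b

/-- The K-submodule [A,A] spanned by commutators. -/
def commSpan (K : Type*) (A : Type*) [CommRing K] [Ring A] [Algebra K A] : Submodule K A :=
  Submodule.span K {x : A | ∃ a b : A, x = a * b - b * a}

section PathAlgebra

variable (K : Type*) [CommRing K]
variable (V : Type*) [Fintype V] (F : Type*) (s t : F → V)

/-- Relations presenting the path algebra of a quiver with vertex set `V`,
arrow set `F`, and source/target maps `s`, `t`: the trivial paths are
orthogonal idempotents summing to 1, and they act correctly on arrows.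
Generators: `Sum.inl a` is the arrow `a`, `Sum.inr v` is the trivial path `e_v`. -/
inductive PathRel : FreeAlgebra K (F ⊕ V) → FreeAlgebra K (F ⊕ V) → Prop
  | vert (v w : V) : PathRel (FreeAlgebra.ι K (Sum.inr v : F ⊕ V) * FreeAlgebra.ι K (Sum.inr w))
      (if v = w then FreeAlgebra.ι K (Sum.inr v : F ⊕ V) else 0)
  | left (a : F) : PathRel (FreeAlgebra.ι K (Sum.inr (s a) : F ⊕ V) * FreeAlgebra.ι K (Sum.inl a))
      (FreeAlgebra.ι K (Sum.inl a : F ⊕ V))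
  | right (a : F) : PathRel (FreeAlgebra.ι K (Sum.inl a : F ⊕ V) * FreeAlgebra.ι K (Sum.inr (t a)))
      (FreeAlgebra.ι K (Sum.inl a : F ⊕ V))
  | one : PathRel (∑ v : V, FreeAlgebra.ι K (Sum.inr v : F ⊕ V)) 1

/-- The path algebra of the quiver. -/
abbrev PathAlg := RingQuot (PathRel K V F s t)

/-- The element of the path algebra given by an arrow. -/
noncomputable def arrowElem (a : F) : PathAlg K V F s t :=
  RingQuot.mkAlgHom K (PathRel K V F s t) (FreeAlgebra.ι K (Sum.inl a))

/-- The element of the path algebra given by a trivial path. -/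
noncomputable def vertElem (v : V) : PathAlg K V F s t :=
  RingQuot.mkAlgHom K (PathRel K V F s t) (FreeAlgebra.ι K (Sum.inr v))

/-- The element of the path algebra given by a list of arrows. -/
noncomputable def pathElem (l : List F) : PathAlg K V F s t :=
  (l.map (arrowElem K V F s t)).prod

end PathAlgebra

section Double

variable (K : Type*) [CommRing K]
variable (V : Type*) [Fintype V] (E : Type*) (s t : E → V)

/-- The involution * on the arrows of the double quiver. -/
def dstar : E ⊕ E → E ⊕ E := Sum.elim Sum.inr Sum.inl

/-- The sign ε: +1 on arrows of Q, -1 on reversed arrows. -/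
def dsgn : E ⊕ E → ℤ := Sum.elim (fun _ => 1) (fun _ => -1)

/-- Source of an arrow of the double quiver. -/
def dsrc : E ⊕ E → V := Sum.elim s t

/-- Target of an arrow of the double quiver. -/
def dtgt : E ⊕ E → V := Sum.elim t s

/-- A list of arrows of the double quiver forms a path when consecutive
arrows are composable. -/
def IsPath (l : List (E ⊕ E)) : Prop :=
  List.Chain' (fun a b => dtgt V E s t a = dsrc V E s t b) l

/-- The path algebra of the double quiver. -/
abbrev DPathAlg := PathAlg K V (E ⊕ E) (dsrc V E s t) (dtgt V E s t)

/-- The right-hand side of the defining formula for the necklace derivation: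
d_p(q) = Σ_i Σ_j ε(q_i) δ_{q_i^*, p_j} q_{<i} p_{>j} p_{<j} q_{>i}. -/
noncomputable def necklaceSum (p q : List (E ⊕ E)) : DPathAlg K V E s t :=
  ∑ i : Fin q.length, ∑ j : Fin p.length,
    if dstar E (q.get i) = p.get j then
      dsgn E (q.get i) •
        pathElem K V (E ⊕ E) (dsrc V E s t) (dtgt V E s t)
          (q.take i.val ++ p.drop (j.val + 1) ++ p.take j.val ++ q.drop (i.val + 1))
    else 0

end Double

/-!
Write `w = ∑_{x ∈ Q̄} ε(x) x x*`. In `ε(x) d_p(x x*)` the terms with `p_j = x*` are the rotations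
`p_{>j} p_{<j} p_j` of `p` starting after position `j`, and those with `p_j = x` are minus the
rotations `p_j p_{>j} p_{<j}` starting at `j`, because `ε(x)² = 1` and `ε(x) ε(x*) = -1`.
Summing over `x`, position `j` contributes `rot_{j+1} p - rot_j p`, and these telescope to
`rot_ℓ p - rot_0 p = 0`.
-/

namespace List

variable {α : Type*}

theorem rotate_succ_eq_drop_append_take_append_getElem (l : List α) {j : ℕ}
    (hj : j < l.length) : l.rotate (j + 1) = l.drop (j + 1) ++ l.take j ++ [l[j]] := by
  rw [rotate_eq_drop_append_take hj, append_assoc, take_concat_get']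

theorem rotate_eq_getElem_cons_drop_append_take (l : List α) {j : ℕ} (hj : j < l.length) :
    l.rotate j = l[j] :: (l.drop (j + 1) ++ l.take j) := by
  rw [rotate_eq_drop_append_take hj.le, ← cons_append, drop_eq_getElem_cons hj]

theorem sum_rotate_succ_sub {M : Type*} [AddCommGroup M] (f : List α → M) (l : List α) :
    ∑ j : Fin l.length, (f (l.rotate (j + 1)) - f (l.rotate j)) = 0 := by
  rw [Fin.sum_univ_eq_sum_range (fun j => f (l.rotate (j + 1)) - f (l.rotate j)),
    Finset.sum_range_sub (fun j => f (l.rotate j)), rotate_length, rotate_zero, sub_self]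

end List

section DoubleQuiver

variable {E : Type*}

@[simp]
theorem dstar_dstar (x : E ⊕ E) : dstar E (dstar E x) = x := by
  cases x <;> rfl

theorem dstar_eq_iff_eq_dstar {x y : E ⊕ E} : dstar E x = y ↔ x = dstar E y := by
  constructor <;> rintro rfl <;> simp

theorem dstar_ne_self (x : E ⊕ E) : dstar E x ≠ x := by
  cases x <;> simp [dstar]

theorem dsgn_dstar (x : E ⊕ E) : dsgn E (dstar E x) = -dsgn E x := by
  cases x <;> rfl

theorem dsgn_mul_self (x : E ⊕ E) : dsgn E x * dsgn E x = 1 := by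
  cases x <;> rfl

theorem isPath_pair_dstar (V : Type*) (s t : E → V) (x : E ⊕ E) :
    IsPath V E s t [x, dstar E x] :=
  List.isChain_pair.2 (by cases x <;> rfl)

end DoubleQuiver

section NecklaceSum

variable (K : Type*) [CommRing K] (V : Type*) [Fintype V] {E : Type*} (s t : E → V)

theorem necklaceSum_pair (p : List (E ⊕ E)) (x y : E ⊕ E) :
    necklaceSum K V E s t p [x, y] = ∑ j : Fin p.length,
      ((if dstar E x = p[(j : ℕ)] then
          dsgn E x • pathElem K V (E ⊕ E) (dsrc V E s t) (dtgt V E s t)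
            (p.drop (j + 1) ++ p.take j ++ [y]) else 0) +
        if dstar E y = p[(j : ℕ)] then
          dsgn E y • pathElem K V (E ⊕ E) (dsrc V E s t) (dtgt V E s t)
            (x :: (p.drop (j + 1) ++ p.take j)) else 0) := by
  simp [necklaceSum, Fin.sum_univ_two, Finset.sum_add_distrib]

theorem dsgn_smul_necklaceSum_pair_dstar (p : List (E ⊕ E)) (x : E ⊕ E) :
    dsgn E x • necklaceSum K V E s t p [x, dstar E x] =
      ∑ j : Fin p.length,
        ((if x = dstar E p[(j : ℕ)] then
            pathElem K V (E ⊕ E) (dsrc V E s t) (dtgt V E s t) (p.rotate (j + 1)) else 0) -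
          if x = p[(j : ℕ)] then
            pathElem K V (E ⊕ E) (dsrc V E s t) (dtgt V E s t) (p.rotate j) else 0) := by
  -- `smul_add` and an unannotated `Finset.smul_sum` do not fire: the `ℤ`-action on `RingQuot`
  -- matches their `AddCommMonoid` instance only after unfolding.
  rw [necklaceSum_pair, Finset.smul_sum (M := ℤ) (N := DPathAlg K V E s t)]
  refine Finset.sum_congr rfl fun j _ => ?_
  simp only [dstar_dstar, dstar_eq_iff_eq_dstar]
  split_ifs with h₁ h₂ h₂
  · exact absurd (h₁.symm.trans h₂) (dstar_ne_self _)
  · subst h₁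
    rw [dstar_dstar, zsmul_add, zsmul_zero, add_zero, smul_smul, dsgn_mul_self, one_smul, sub_zero,
      ← List.rotate_succ_eq_drop_append_take_append_getElem _ j.2]
  · subst h₂
    rw [zsmul_add, zsmul_zero, zero_add, smul_smul, dsgn_dstar, mul_neg, dsgn_mul_self,
      neg_one_smul, zero_sub, ← List.rotate_eq_getElem_cons_drop_append_take _ j.2]
  · simp

theorem sum_dsgn_smul_necklaceSum_pair_dstar [Fintype E] (p : List (E ⊕ E)) :
    ∑ x : E ⊕ E, dsgn E x • necklaceSum K V E s t p [x, dstar E x] = 0 := by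
  simp only [dsgn_smul_necklaceSum_pair_dstar]
  rw [Finset.sum_comm]
  refine (Finset.sum_congr rfl fun j _ => ?_).trans
    (List.sum_rotate_succ_sub (pathElem K V (E ⊕ E) (dsrc V E s t) (dtgt V E s t)) p)
  rw [Finset.sum_sub_distrib, Fintype.sum_ite_eq', Fintype.sum_ite_eq']

theorem sum_commutator_arrowElem [Fintype E] :
    ∑ a : E,
        (arrowElem K V (E ⊕ E) (dsrc V E s t) (dtgt V E s t) (Sum.inl a) *
            arrowElem K V (E ⊕ E) (dsrc V E s t) (dtgt V E s t) (Sum.inr a) -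
          arrowElem K V (E ⊕ E) (dsrc V E s t) (dtgt V E s t) (Sum.inr a) *
            arrowElem K V (E ⊕ E) (dsrc V E s t) (dtgt V E s t) (Sum.inl a)) =
      ∑ x : E ⊕ E,
        dsgn E x • pathElem K V (E ⊕ E) (dsrc V E s t) (dtgt V E s t) [x, dstar E x] := by
  rw [Fintype.sum_sum_type, ← Finset.sum_add_distrib]
  refine Finset.sum_congr rfl fun a _ => ?_
  simp only [pathElem, dsgn, dstar, Sum.elim_inl, Sum.elim_inr, List.map_cons, List.map_nil,
    List.prod_cons, List.prod_nil, mul_one, one_zsmul, neg_one_zsmul, sub_eq_add_neg]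

end NecklaceSum

theorem necklace_derivation_kills_w_general
    (K : Type*) [CommRing K] (V : Type*) [Fintype V] (E : Type*) [Fintype E] (s t : E → V)
    (p : List (E ⊕ E))
    (d : DPathAlg K V E s t →ₗ[K] DPathAlg K V E s t)
    (hdp : ∀ q : List (E ⊕ E), IsPath V E s t q →
      d (pathElem K V (E ⊕ E) (dsrc V E s t) (dtgt V E s t) q) = necklaceSum K V E s t p q) :
    d (∑ a : E,
        (arrowElem K V (E ⊕ E) (dsrc V E s t) (dtgt V E s t) (Sum.inl a) *
           arrowElem K V (E ⊕ E) (dsrc V E s t) (dtgt V E s t) (Sum.inr a)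
         - arrowElem K V (E ⊕ E) (dsrc V E s t) (dtgt V E s t) (Sum.inr a) *
           arrowElem K V (E ⊕ E) (dsrc V E s t) (dtgt V E s t) (Sum.inl a))) = 0 := by
  rw [sum_commutator_arrowElem, map_sum]
  simp only [map_zsmul, hdp _ (isPath_pair_dstar V s t _)]
  exact sum_dsgn_smul_necklaceSum_pair_dstar K V s t p

/-- The necklace derivation d_p kills w = Σ_{a∈Q} [a,a*]: any derivation
satisfying the necklace formula for p on paths sends w to 0. -/
theorem necklace_derivation_kills_w
    (K : Type*) [CommRing K] (V : Type*) [Fintype V] (E : Type*) [Fintype E] (s t : E → V)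
    (p : List (E ⊕ E)) (hp : IsPath V E s t p)
    (d : DPathAlg K V E s t →ₗ[K] DPathAlg K V E s t)
    (hd : IsDerivation K d)
    (hdp : ∀ q : List (E ⊕ E), IsPath V E s t q →
      d (pathElem K V (E ⊕ E) (dsrc V E s t) (dtgt V E s t) q) = necklaceSum K V E s t p q) :
    d (∑ a : E,
        (arrowElem K V (E ⊕ E) (dsrc V E s t) (dtgt V E s t) (Sum.inl a) *
           arrowElem K V (E ⊕ E) (dsrc V E s t) (dtgt V E s t) (Sum.inr a)
         - arrowElem K V (E ⊕ E) (dsrc V E s t) (dtgt V E s t) (Sum.inr a) *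
           arrowElem K V (E ⊕ E) (dsrc V E s t) (dtgt V E s t) (Sum.inl a))) = 0 :=
  necklace_derivation_kills_w_general K V E s t p d hdp
end

section
/- Given a derivation d : A → A with d(e_v) = 0 for all v, there is a unique derivation d_α of the commutative algebra K[Rep(A,α)] satisfying d_α(a_{ij}) = d(a)_{ij} for all a ∈ A and 1 ≤ i,j ≤ n. -/
/-! The polynomial derivation x_{a,i,j} ↦ x_{d a,i,j} of K[x_{a,i,j}] sends every defining
relation of K[Rep(A,α)] into the ideal they generate: the product relations by the Leibniz rule
for d, the linearity relations by linearity of d, and the relations x_{e_v,i,j} = Δ^v_{ij}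
because d(e_v) = 0. By the Leibniz rule it then preserves the whole ideal, so it descends to
K[Rep(A,α)]. Uniqueness holds because a derivation of a quotient of a polynomial ring is
determined by its values on the images of the variables. -/

open scoped Classical

/-- The inner derivation x ↦ cx - xc. -/
def innerDer (K : Type*) {A : Type*} [CommRing K] [Ring A] [Algebra K A] (c : A) :
    A →ₗ[K] A :=
  LinearMap.mulLeft K c - LinearMap.mulRight K c

section Rep

variable (K : Type*) (A : Type*) [CommRing K] [Ring A] [Algebra K A]
variable (m : ℕ) (e : Fin m → A) (α : Fin m → ℕ)

/-- e_1, ..., e_m is a complete set of orthogonal idempotents. -/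
def CompleteOrthIdem : Prop :=
  (∀ v, e v * e v = e v) ∧ (∀ v w, v ≠ w → e v * e w = 0) ∧ (∑ v, e v = 1)

/-- n = Σ_v α_v. -/
def nn : ℕ := ∑ v, α v

/-- i lies in the v-th diagonal block. -/
def inBlock (v : Fin m) (i : Fin (nn m α)) : Prop :=
  (∑ w ∈ Finset.univ.filter (· < v), α w) ≤ i.val ∧
    i.val < ∑ w ∈ Finset.univ.filter (· ≤ v), α w

/-- The entries of the diagonal 0-1 matrix Δ^v. -/
noncomputable def delta (v : Fin m) (i j : Fin (nn m α)) : K :=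
  if i = j ∧ inBlock m α v i then 1 else 0

/-- The defining relations of the coordinate ring K[Rep(A,α)] among the
generators a_{ij}. -/
def repRels : Set (MvPolynomial (A × Fin (nn m α) × Fin (nn m α)) K) :=
  {P | (∃ (a b : A) (i j : Fin (nn m α)),
          P = MvPolynomial.X (a * b, i, j)
              - ∑ k, MvPolynomial.X (a, i, k) * MvPolynomial.X (b, k, j)) ∨
       (∃ (a b : A) (i j : Fin (nn m α)),
          P = MvPolynomial.X (a + b, i, j) - MvPolynomial.X (a, i, j) - MvPolynomial.X (b, i, j)) ∨
       (∃ (c : K) (a : A) (i j : Fin (nn m α)),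
          P = MvPolynomial.X (c • a, i, j) - MvPolynomial.C c * MvPolynomial.X (a, i, j)) ∨
       (∃ (v : Fin m) (i j : Fin (nn m α)),
          P = MvPolynomial.X (e v, i, j) - MvPolynomial.C (delta K m α v i j))}

/-- The coordinate ring K[Rep(A,α)] of the representation scheme. -/
abbrev RepRing := MvPolynomial (A × Fin (nn m α) × Fin (nn m α)) K ⧸
  Ideal.span (repRels K A m e α)

/-- The generator a_{ij} of K[Rep(A,α)]. -/
noncomputable def repGen (a : A) (i j : Fin (nn m α)) : RepRing K A m e α :=
  Ideal.Quotient.mk _ (MvPolynomial.X (a, i, j))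

/-- The trace function tr_α a = Σ_i a_{ii}. -/
noncomputable def trRep (a : A) : RepRing K A m e α :=
  ∑ i, repGen K A m e α a i i

/-- The trace algebra T(A,α), generated by the elements tr_α a. -/
noncomputable def traceAlg : Subalgebra K (RepRing K A m e α) :=
  Algebra.adjoin K (Set.range (trRep K A m e α))

end Rep

theorem Derivation.map_mem_span {R A : Type*} [CommSemiring R] [CommSemiring A] [Algebra R A]
    (D : Derivation R A A) {S : Set A} (hS : ∀ s ∈ S, D s ∈ Ideal.span S) {x : A}
    (hx : x ∈ Ideal.span S) : D x ∈ Ideal.span S := by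
  induction hx using Submodule.span_induction with
  | mem s hs => exact hS s hs
  | zero => simp
  | add x y _ _ hDx hDy => rw [map_add]; exact add_mem hDx hDy
  | smul r x hx hDx =>
    rw [smul_eq_mul, Derivation.leibniz, smul_eq_mul, smul_eq_mul]
    exact add_mem (Ideal.mul_mem_left _ r hDx) (Ideal.mul_mem_right _ _ hx)

theorem Derivation.isDerivation {K B : Type*} [CommRing K] [CommRing B] [Algebra K B]
    (D : Derivation K B B) : IsDerivation K (D : B →ₗ[K] B) := fun a b => by
  simp only [Derivation.coeFn_coe, Derivation.leibniz, smul_eq_mul, mul_comm b]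

noncomputable def IsDerivation.toDerivation {K B : Type*} [CommRing K] [CommRing B] [Algebra K B]
    {D : B →ₗ[K] B} (hD : IsDerivation K D) : Derivation K B B :=
  Derivation.mk' D fun a b => by rw [hD, smul_eq_mul, smul_eq_mul, mul_comm b]

theorem Derivation.quotient_mvPolynomial_ext {K σ : Type*} [CommRing K]
    {I : Ideal (MvPolynomial σ K)}
    {D₁ D₂ : Derivation K (MvPolynomial σ K ⧸ I) (MvPolynomial σ K ⧸ I)}
    (h : ∀ s, D₁ (Ideal.Quotient.mk I (MvPolynomial.X s)) =
      D₂ (Ideal.Quotient.mk I (MvPolynomial.X s))) :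
    D₁ = D₂ := by
  have hcomp : D₁.compAlgebraMap (MvPolynomial σ K) = D₂.compAlgebraMap (MvPolynomial σ K) :=
    MvPolynomial.derivation_ext h
  ext x
  obtain ⟨p, rfl⟩ := Ideal.Quotient.mk_surjective x
  exact congrArg (· p) hcomp

section RepRing

variable {K A : Type*} [CommRing K] [Ring A] [Algebra K A]
  {m : ℕ} {e : Fin m → A} {α : Fin m → ℕ}

theorem mk_X_eq_repGen (a : A) (i j : Fin (nn m α)) :
    Ideal.Quotient.mk (Ideal.span (repRels K A m e α)) (MvPolynomial.X (a, i, j)) =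
      repGen K A m e α a i j :=
  rfl

theorem mk_repRels_eq_zero {P : MvPolynomial (A × Fin (nn m α) × Fin (nn m α)) K}
    (hP : P ∈ repRels K A m e α) : Ideal.Quotient.mk (Ideal.span (repRels K A m e α)) P = 0 :=
  Ideal.Quotient.eq_zero_iff_mem.mpr (Ideal.subset_span hP)

theorem repGen_mul (a b : A) (i j : Fin (nn m α)) :
    repGen K A m e α (a * b) i j = ∑ k, repGen K A m e α a i k * repGen K A m e α b k j := by
  have h := mk_repRels_eq_zero (K := K) (e := e) (Or.inl ⟨a, b, i, j, rfl⟩)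
  simpa only [repGen, map_sub, map_sum, map_mul, sub_eq_zero] using h

theorem repGen_add (a b : A) (i j : Fin (nn m α)) :
    repGen K A m e α (a + b) i j = repGen K A m e α a i j + repGen K A m e α b i j := by
  have h := mk_repRels_eq_zero (K := K) (e := e) (Or.inr (Or.inl ⟨a, b, i, j, rfl⟩))
  rwa [map_sub, map_sub, sub_sub, sub_eq_zero] at h

theorem repGen_zero (i j : Fin (nn m α)) : repGen K A m e α 0 i j = 0 := by
  simpa using repGen_add (K := K) (e := e) (0 : A) 0 i j

variable (α) in
noncomputable def coordDerivation (d : A →ₗ[K] A) :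
    Derivation K (MvPolynomial (A × Fin (nn m α) × Fin (nn m α)) K)
      (MvPolynomial (A × Fin (nn m α) × Fin (nn m α)) K) :=
  MvPolynomial.mkDerivation K fun s => MvPolynomial.X (d s.1, s.2.1, s.2.2)

theorem coordDerivation_X (d : A →ₗ[K] A) (a : A) (i j : Fin (nn m α)) :
    coordDerivation α d (MvPolynomial.X (a, i, j)) = MvPolynomial.X (d a, i, j) :=
  MvPolynomial.mkDerivation_X _ _ _

theorem mk_coordDerivation_repRels {d : A →ₗ[K] A} (hd : IsDerivation K d)
    (hde : ∀ v, d (e v) = 0) {P : MvPolynomial (A × Fin (nn m α) × Fin (nn m α)) K}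
    (hP : P ∈ repRels K A m e α) :
    Ideal.Quotient.mk (Ideal.span (repRels K A m e α)) (coordDerivation α d P) = 0 := by
  rcases hP with
    ⟨a, b, i, j, rfl⟩ | ⟨a, b, i, j, rfl⟩ | ⟨c, a, i, j, rfl⟩ | ⟨v, i, j, rfl⟩
  · simp only [map_sub, map_sum, Derivation.leibniz, coordDerivation_X, smul_eq_mul, map_add,
      map_mul, mk_X_eq_repGen]
    rw [hd, repGen_add, repGen_mul, repGen_mul, Finset.sum_add_distrib]
    simp only [mul_comm (repGen K A m e α b _ _)]
    abel
  · convert mk_repRels_eq_zero (Or.inr (Or.inl ⟨d a, d b, i, j, rfl⟩)) using 2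
    simp only [map_sub, coordDerivation_X, map_add]
  · convert mk_repRels_eq_zero (Or.inr (Or.inr (Or.inl ⟨c, d a, i, j, rfl⟩))) using 2
    simp only [map_sub, coordDerivation_X, Derivation.leibniz, MvPolynomial.derivation_C,
      smul_eq_mul, mul_zero, add_zero, map_smul]
  · rw [map_sub, coordDerivation_X, hde, MvPolynomial.derivation_C, sub_zero]
    exact repGen_zero i j

variable (α) in
noncomputable def repDerivation {d : A →ₗ[K] A} (hd : IsDerivation K d)
    (hde : ∀ v, d (e v) = 0) : Derivation K (RepRing K A m e α) (RepRing K A m e α) :=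
  Derivation.liftOfSurjective (Ideal.Quotient.mkₐ_surjective K _) (d := coordDerivation α d)
    fun _ hP => by
      rw [Ideal.Quotient.mkₐ_eq_mk, Ideal.Quotient.eq_zero_iff_mem] at hP ⊢
      exact Derivation.map_mem_span _
        (fun _ hQ => Ideal.Quotient.eq_zero_iff_mem.mp (mk_coordDerivation_repRels hd hde hQ)) hP

theorem repDerivation_repGen {d : A →ₗ[K] A} (hd : IsDerivation K d) (hde : ∀ v, d (e v) = 0)
    (a : A) (i j : Fin (nn m α)) :
    repDerivation α hd hde (repGen K A m e α a i j) = repGen K A m e α (d a) i j := by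
  rw [repDerivation, repGen, ← Ideal.Quotient.mkₐ_eq_mk K, Derivation.liftOfSurjective_apply,
    coordDerivation_X, Ideal.Quotient.mkₐ_eq_mk, mk_X_eq_repGen]

end RepRing

theorem induced_derivation_on_repRing_general
    (K : Type*) (A : Type*) [CommRing K] [Ring A] [Algebra K A]
    (m : ℕ) (e : Fin m → A) (α : Fin m → ℕ)
    (d : A →ₗ[K] A) (hd : IsDerivation K d) (hde : ∀ v, d (e v) = 0) :
    ∃! D : RepRing K A m e α →ₗ[K] RepRing K A m e α,
      IsDerivation K D ∧
      ∀ (a : A) (i j : Fin (nn m α)),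
        D (repGen K A m e α a i j) = repGen K A m e α (d a) i j := by
  refine ⟨repDerivation α hd hde,
    ⟨(repDerivation α hd hde).isDerivation, repDerivation_repGen hd hde⟩, ?_⟩
  rintro D ⟨hD, hD_repGen⟩
  have hD_eq : hD.toDerivation = repDerivation α hd hde :=
    Derivation.quotient_mvPolynomial_ext fun ⟨a, i, j⟩ =>
      (hD_repGen a i j).trans (repDerivation_repGen hd hde a i j).symm
  exact congrArg Derivation.toLinearMap hD_eq

/-- Given a derivation d of A with d(e_v) = 0 for all v, there is a unique
derivation d_α of K[Rep(A,α)] with d_α(a_{ij}) = d(a)_{ij}. -/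
theorem induced_derivation_on_repRing
    (K : Type*) (A : Type*) [CommRing K] [Ring A] [Algebra K A]
    (m : ℕ) (e : Fin m → A) (α : Fin m → ℕ)
    (he : CompleteOrthIdem A m e)
    (d : A →ₗ[K] A) (hd : IsDerivation K d) (hde : ∀ v, d (e v) = 0) :
    ∃! D : RepRing K A m e α →ₗ[K] RepRing K A m e α,
      IsDerivation K D ∧
      ∀ (a : A) (i j : Fin (nn m α)),
        D (repGen K A m e α a i j) = repGen K A m e α (d a) i j :=
  induced_derivation_on_repRing_general K A m e α d hd hde
end

section
/- Given a noncommutative Poisson structure ⟨-,-⟩ on A, for each a ∈ A one may choose a representing derivation d_a with d_a(e_v) = 0 for all v: if d is any derivation inducing ⟨ā,-⟩, then there exists a' ∈ A such that x ↦ d(x) − [a',x] is a derivation vanishing on all e_v and still inducing ⟨ā,-⟩ on A/[A,A]. -/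
open scoped Classical

/-!
Because `∑ eᵥ = 1` and the `eᵥ` are orthogonal idempotents, the Leibniz rule applied to
`eᵥ eᵥ = eᵥ` and `e_w eᵥ = 0` forces `d(eᵥ) = [c, eᵥ]` for `c = ∑ᵥ d(eᵥ) eᵥ`: on the separable
subalgebra spanned by the `eᵥ` every derivation is inner. Subtracting the inner derivation
`[c, -]` from `d` keeps the Leibniz rule, kills the `eᵥ`, and changes `d` only by commutators,
which vanish in `A/[A,A]`.
-/

section Derivation

variable {K A : Type*} [CommRing K] [Ring A] [Algebra K A]

theorem innerDer_apply (c x : A) : innerDer K c x = c * x - x * c := rfl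

theorem isDerivation_innerDer (c : A) : IsDerivation K (innerDer K c) := by
  intro x y
  simp only [innerDer_apply]
  noncomm_ring

theorem IsDerivation.sub {d d' : A →ₗ[K] A} (hd : IsDerivation K d) (hd' : IsDerivation K d') :
    IsDerivation K (d - d') := by
  intro x y
  simp only [LinearMap.sub_apply, hd x y, hd' x y]
  noncomm_ring

theorem innerDer_apply_mem_commSpan (c x : A) : innerDer K c x ∈ commSpan K A :=
  Submodule.subset_span ⟨c, x, rfl⟩

theorem commSpan_mk_sub_innerDer_apply (d : A →ₗ[K] A) (c x : A) :
    Submodule.Quotient.mk (p := commSpan K A) ((d - innerDer K c) x)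
      = Submodule.Quotient.mk (d x) := by
  rw [Submodule.Quotient.eq, LinearMap.sub_apply, sub_sub_cancel_left, neg_mem_iff]
  exact innerDer_apply_mem_commSpan c x

theorem IsDerivation.exists_innerDer_eq_on_completeOrthogonalIdempotents {ι : Type*} [Fintype ι]
    {e : ι → A} (he : CompleteOrthogonalIdempotents e) {d : A →ₗ[K] A} (hd : IsDerivation K d) :
    ∃ c : A, ∀ i, d (e i) = innerDer K c (e i) := by
  refine ⟨∑ i, d (e i) * e i, fun j => ?_⟩
  have hright : (∑ i, d (e i) * e i) * e j = d (e j) * e j := by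
    simp [Finset.sum_mul, mul_assoc, he.mul_eq]
  have hleft : e j * ∑ i, d (e i) * e i = d (e j) * e j - d (e j) := by
    calc e j * ∑ i, d (e i) * e i
        = ∑ i, (d (e j * e i) - d (e j) * e i) * e i := by
          rw [Finset.mul_sum]
          refine Finset.sum_congr rfl fun i _ => ?_
          rw [hd, add_sub_cancel_right, mul_assoc]
      _ = ∑ i, d (e j * e i) * e i - d (e j) * ∑ i, e i * e i := by
          simp only [sub_mul, Finset.sum_sub_distrib, Finset.mul_sum, mul_assoc]
      _ = d (e j) * e j - d (e j) := by
          simp [he.mul_eq, apply_ite d, he.complete]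
  rw [innerDer_apply, hright, hleft, sub_sub_cancel]

end Derivation

theorem CompleteOrthIdem.completeOrthogonalIdempotents {A : Type*} [Ring A] {m : ℕ}
    {e : Fin m → A} (he : CompleteOrthIdem A m e) : CompleteOrthogonalIdempotents e :=
  ⟨⟨he.1, fun _ _ hvw => he.2.1 _ _ hvw⟩, he.2.2⟩

theorem representing_derivation_kills_idempotents_general
    (K : Type*) (A : Type*) [Field K] [Ring A] [Algebra K A]
    (m : ℕ) (e : Fin m → A)
    (he : CompleteOrthIdem A m e)
    (B : (A ⧸ commSpan K A) →ₗ[K] (A ⧸ commSpan K A) →ₗ[K] (A ⧸ commSpan K A))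
    (a : A) (d : A →ₗ[K] A) (hd : IsDerivation K d)
    (hda : ∀ b : A, B (Submodule.Quotient.mk a) (Submodule.Quotient.mk b)
      = Submodule.Quotient.mk (d b)) :
    ∃ a' : A,
      IsDerivation K (d - innerDer K a') ∧
      (∀ v, (d - innerDer K a') (e v) = 0) ∧
      ∀ b : A, B (Submodule.Quotient.mk a) (Submodule.Quotient.mk b)
        = Submodule.Quotient.mk ((d - innerDer K a') b) := by
  obtain ⟨c, hc⟩ :=
    hd.exists_innerDer_eq_on_completeOrthogonalIdempotents he.completeOrthogonalIdempotents
  refine ⟨c, hd.sub (isDerivation_innerDer c), fun v => ?_, fun b => ?_⟩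
  · rw [LinearMap.sub_apply, hc v, sub_self]
  · rw [hda b, commSpan_mk_sub_innerDer_apply]

/-- Representing derivations of a noncommutative Poisson structure can be
chosen to vanish on the idempotents e_v, by subtracting an inner derivation. -/
theorem representing_derivation_kills_idempotents
    (K : Type*) (A : Type*) [Field K] [CharZero K] [Ring A] [Algebra K A]
    (m : ℕ) (e : Fin m → A)
    (he : CompleteOrthIdem A m e)
    (B : (A ⧸ commSpan K A) →ₗ[K] (A ⧸ commSpan K A) →ₗ[K] (A ⧸ commSpan K A))
    (halt : ∀ x, B x x = 0)
    (hjac : ∀ x y z, B x (B y z) + B y (B z x) + B z (B x y) = 0)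
    (hrep : ∀ a : A, ∃ d : A →ₗ[K] A, IsDerivation K d ∧
      ∀ b : A, B (Submodule.Quotient.mk a) (Submodule.Quotient.mk b)
          = Submodule.Quotient.mk (d b))
    (a : A) (d : A →ₗ[K] A) (hd : IsDerivation K d)
    (hda : ∀ b : A, B (Submodule.Quotient.mk a) (Submodule.Quotient.mk b)
      = Submodule.Quotient.mk (d b)) :
    ∃ a' : A,
      IsDerivation K (d - innerDer K a') ∧
      (∀ v, (d - innerDer K a') (e v) = 0) ∧
      ∀ b : A, B (Submodule.Quotient.mk a) (Submodule.Quotient.mk b)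
        = Submodule.Quotient.mk ((d - innerDer K a') b) :=
  representing_derivation_kills_idempotents_general K A m e he B a d hd hda
end
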